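/- Let F ⊂ ℝⁿ, 0 < λ < 1, and s ≥ 0. For every i ∈ ℕ let {x_k^i}_{k∈I_i} be a maximal λ^i-separated set in F. Assume that for each i ∈ ℕ and k ∈ I_i there exists j > i such that the number N_j of indices l ∈ I_j with B(x_l^j, λ^j) ∩ B(x_k^i, λ^i) ≠ ∅ satisfies N_j < λ^{-(j-i)s}. Then the Hausdorff dimension of F is at most s. -/

import Mathlib

/-!
Fix `d > s` and put `q = λ^(d-s) < 1`. Starting from a ball `B(x, λ^i)` with `x ∈ T i`, replace
it by the balls `B(y, λ^j)`, `y ∈ T j`, that meet it; by maximality of `T j` they still cover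
`F ∩ B(x, λ^i)`, and since there are fewer than `λ^(-(j-i)s)` of them the sum of `radius^d`
is multiplied by at most `λ^((j-i)(d-s)) ≤ q`. After `m` rounds `F ∩ B(x, λ^i)` is covered by
finitely many balls of radius at most `λ^(i+m)` with `∑ radius^d ≤ q^m λ^(id)`, so its
`d`-dimensional Hausdorff measure vanishes. These sets are neighbourhoods in `F` of all points
of `F`, so `dim_H F ≤ s`.
-/

open MeasureTheory Metric Set Filter
noncomputable section

abbrev Euc (n : ℕ) := EuclideanSpace ℝ (Fin n)

open Topology
open scoped ENNReal

section NetCovers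

variable {X : Type*} [MetricSpace X]

theorem hausdorffMeasure_eq_zero_of_pow_ball_covers [MeasurableSpace X] [BorelSpace X]
    {E : Set X} {lam d : ℝ} (hl0 : 0 < lam) (hl1 : lam < 1) (hd : 0 ≤ d) {ε : ℕ → ℝ}
    (hε : Tendsto ε atTop (𝓝 0))
    (hcov : ∀ m, ∃ C : Finset (ℕ × X), (∀ c ∈ C, m ≤ c.1) ∧
      E ⊆ ⋃ c ∈ C, ball c.2 (lam ^ c.1) ∧ ∑ c ∈ C, (lam ^ c.1) ^ d ≤ ε m) :
    μH[d] E = 0 := by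
  choose C hlevel hcover hsum using hcov
  have hdiam (k : ℕ) (x : X) : ediam (ball x (lam ^ k)) ≤ 2 * ENNReal.ofReal (lam ^ k) := by
    rw [← eball_ofReal]
    exact ediam_eball_le
  have hle := Measure.hausdorffMeasure_le_liminf_sum d E (fun m => 2 * ENNReal.ofReal (lam ^ m))
    (by simpa using ENNReal.Tendsto.const_mul (a := 2) (ENNReal.tendsto_ofReal
      (tendsto_pow_atTop_nhds_zero_of_lt_one hl0.le hl1)) (Or.inr ENNReal.ofNat_ne_top))
    (fun m (c : C m) => ball c.1.2 (lam ^ c.1.1))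
    (Eventually.of_forall fun m c => (hdiam _ _).trans <| mul_le_mul_right
      (ENNReal.ofReal_le_ofReal (pow_le_pow_of_le_one hl0.le hl1.le (hlevel m c c.2))) 2)
    (Eventually.of_forall fun m z hz => by
      obtain ⟨c, hc, hzc⟩ := mem_iUnion₂.1 (hcover m hz)
      exact mem_iUnion.2 ⟨⟨c, hc⟩, hzc⟩)
  have hbound (m : ℕ) : ∑ c : C m, ediam (ball c.1.2 (lam ^ c.1.1)) ^ d
      ≤ 2 ^ d * ENNReal.ofReal (ε m) := by
    calc ∑ c : C m, ediam (ball c.1.2 (lam ^ c.1.1)) ^ d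
        = ∑ c ∈ C m, ediam (ball c.2 (lam ^ c.1)) ^ d :=
          Finset.sum_coe_sort (C m) fun c => ediam (ball c.2 (lam ^ c.1)) ^ d
      _ ≤ ∑ c ∈ C m, 2 ^ d * ENNReal.ofReal ((lam ^ c.1) ^ d) := by
          gcongr with c
          rw [← ENNReal.ofReal_rpow_of_nonneg (by positivity) hd,
            ← ENNReal.mul_rpow_of_nonneg _ _ hd]
          gcongr
          exact hdiam _ _
      _ = 2 ^ d * ENNReal.ofReal (∑ c ∈ C m, (lam ^ c.1) ^ d) := by
          rw [← Finset.mul_sum, ENNReal.ofReal_sum_of_nonneg fun c _ => by positivity]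
      _ ≤ 2 ^ d * ENNReal.ofReal (ε m) := by gcongr; exact hsum m
  have hlim : Tendsto (fun m => (2 : ℝ≥0∞) ^ d * ENNReal.ofReal (ε m)) atTop (𝓝 0) := by
    simpa using ENNReal.Tendsto.const_mul (a := 2 ^ d) (ENNReal.tendsto_ofReal hε)
      (Or.inr (by simp))
  refine le_antisymm ?_ zero_le
  calc μH[d] E ≤ _ := hle
    _ ≤ liminf (fun m => (2 : ℝ≥0∞) ^ d * ENNReal.ofReal (ε m)) atTop :=
        liminf_le_liminf (Eventually.of_forall hbound)
    _ = 0 := hlim.liminf_eq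

theorem natCast_mul_pow_rpow_le {lam s d : ℝ} (hl0 : 0 < lam) (hl1 : lam < 1) (hsd : s ≤ d)
    {i j N : ℕ} (hij : i < j) (hN : (N : ℝ) < lam ^ (-((j : ℝ) - i) * s)) :
    N * (lam ^ j) ^ d ≤ lam ^ (d - s) * (lam ^ i) ^ d := by
  rw [← Real.rpow_natCast_mul hl0.le, ← Real.rpow_natCast_mul hl0.le]
  have hji : (i : ℝ) + 1 ≤ j := by exact_mod_cast hij
  calc N * lam ^ (j * d) ≤ lam ^ (-((j : ℝ) - i) * s) * lam ^ (j * d) := by gcongr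
    _ = lam ^ (-((j : ℝ) - i) * s + j * d) := (Real.rpow_add hl0 _ _).symm
    _ ≤ lam ^ (d - s + i * d) := by
        apply Real.rpow_le_rpow_of_exponent_ge hl0 hl1.le
        nlinarith
    _ = lam ^ (d - s) * lam ^ (i * d) := Real.rpow_add hl0 _ _

/-- `N_j` in the paper is the cardinality of `netNeighbors T lam j i x`. -/
def netNeighbors (T : ℕ → Set X) (lam : ℝ) (j i : ℕ) (x : X) : Set X :=
  {y ∈ T j | (ball y (lam ^ j) ∩ ball x (lam ^ i)).Nonempty}

variable {F : Set X} {T : ℕ → Set X} {lam s d : ℝ}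

theorem exists_pow_ball_cover_of_netNeighbors (hl0 : 0 < lam) (hl1 : lam < 1) (hsd : s ≤ d)
    (hmax : ∀ i, ∀ z ∈ F, ∃ x ∈ T i, dist z x < lam ^ i)
    (hN : ∀ i : ℕ, ∀ x ∈ T i, ∃ j, i < j ∧ (netNeighbors T lam j i x).Finite ∧
      ((netNeighbors T lam j i x).ncard : ℝ) < lam ^ (-((j : ℝ) - (i : ℝ)) * s))
    (m : ℕ) {i : ℕ} {x : X} (hx : x ∈ T i) :
    ∃ C : Finset (ℕ × X), (∀ c ∈ C, i + m ≤ c.1) ∧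
      F ∩ ball x (lam ^ i) ⊆ ⋃ c ∈ C, ball c.2 (lam ^ c.1) ∧
      ∑ c ∈ C, (lam ^ c.1) ^ d ≤ (lam ^ (d - s)) ^ m * (lam ^ i) ^ d := by
  induction m generalizing i x with
  | zero => exact ⟨{(i, x)}, by simp, by simp, by simp⟩
  | succ m ih =>
    classical
    obtain ⟨j, hij, hfin, hcard⟩ := hN i x hx
    choose! C hlevel hcover hsum using fun j (y : X) (hy : y ∈ T j) => ih hy
    set Y := hfin.toFinset
    have hY (y : X) : y ∈ Y ↔ y ∈ netNeighbors T lam j i x := hfin.mem_toFinset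
    refine ⟨(Y.sigma fun y => C j y).image Sigma.snd, ?_, ?_, ?_⟩
    · simp only [Finset.mem_image, Finset.mem_sigma]
      rintro _ ⟨⟨y, c⟩, ⟨hy, hc⟩, rfl⟩
      have := hlevel j y ((hY y).1 hy).1 c hc
      dsimp only
      omega
    · rintro z ⟨hzF, hzx⟩
      obtain ⟨y, hyT, hzy⟩ := hmax j z hzF
      have hyY : y ∈ Y := (hY y).2 ⟨hyT, z, hzy, hzx⟩
      obtain ⟨c, hc, hzc⟩ := mem_iUnion₂.1 (hcover j y hyT ⟨hzF, hzy⟩)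
      exact mem_iUnion₂.2 ⟨c, Finset.mem_image.2 ⟨⟨y, c⟩, Finset.mem_sigma.2 ⟨hyY, hc⟩, rfl⟩, hzc⟩
    · have hYcard : (Y.card : ℝ) < lam ^ (-((j : ℝ) - i) * s) := by
        rwa [Set.ncard_eq_toFinset_card _ hfin] at hcard
      calc ∑ c ∈ (Y.sigma fun y => C j y).image Sigma.snd, (lam ^ c.1) ^ d
          ≤ ∑ p ∈ Y.sigma fun y => C j y, (lam ^ p.2.1) ^ d :=
            Finset.sum_image_le_of_nonneg fun _ _ => by positivity
        _ = ∑ y ∈ Y, ∑ c ∈ C j y, (lam ^ c.1) ^ d := Finset.sum_sigma _ _ _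
        _ ≤ ∑ _y ∈ Y, (lam ^ (d - s)) ^ m * (lam ^ j) ^ d :=
            Finset.sum_le_sum fun y hy => hsum j y ((hY y).1 hy).1
        _ = (lam ^ (d - s)) ^ m * (Y.card * (lam ^ j) ^ d) := by
            rw [Finset.sum_const, nsmul_eq_mul]; ring
        _ ≤ (lam ^ (d - s)) ^ m * (lam ^ (d - s) * (lam ^ i) ^ d) :=
            mul_le_mul_of_nonneg_left (natCast_mul_pow_rpow_le hl0 hl1 hsd hij hYcard)
              (by positivity)
        _ = (lam ^ (d - s)) ^ (m + 1) * (lam ^ i) ^ d := by ring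

theorem dimH_inter_ball_le_of_netNeighbors (hl0 : 0 < lam) (hl1 : lam < 1)
    (hmax : ∀ i, ∀ z ∈ F, ∃ x ∈ T i, dist z x < lam ^ i)
    (hN : ∀ i : ℕ, ∀ x ∈ T i, ∃ j, i < j ∧ (netNeighbors T lam j i x).Finite ∧
      ((netNeighbors T lam j i x).ncard : ℝ) < lam ^ (-((j : ℝ) - (i : ℝ)) * s))
    {i : ℕ} {x : X} (hx : x ∈ T i) :
    dimH (F ∩ ball x (lam ^ i)) ≤ ENNReal.ofReal s := by
  borelize X
  refine dimH_le fun d hd => ?_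
  by_contra! hlt
  have hsd : s < d :=
    (ENNReal.ofReal_lt_ofReal_iff'.1 (by rwa [ENNReal.ofReal_coe_nnreal])).1
  have hq : lam ^ ((d : ℝ) - s) < 1 := Real.rpow_lt_one hl0.le hl1 (sub_pos.2 hsd)
  have hzero : μH[d] (F ∩ ball x (lam ^ i)) = 0 := by
    have hε : Tendsto (fun m => (lam ^ ((d : ℝ) - s)) ^ m * (lam ^ i) ^ (d : ℝ)) atTop (𝓝 0) := by
      simpa using (tendsto_pow_atTop_nhds_zero_of_lt_one (by positivity) hq).mul_const
        ((lam ^ i) ^ (d : ℝ))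
    refine hausdorffMeasure_eq_zero_of_pow_ball_covers hl0 hl1 d.2 hε fun m => ?_
    obtain ⟨C, hlevel, hcover, hsum⟩ :=
      exists_pow_ball_cover_of_netNeighbors hl0 hl1 hsd.le hmax hN m hx
    exact ⟨C, fun c hc => le_add_self.trans (hlevel c hc), hcover, hsum⟩
  simp [hzero] at hd

end NetCovers

theorem stmt0_general {n : ℕ} (F : Set (Euc n)) (lam s : ℝ) (hl0 : 0 < lam) (hl1 : lam < 1)
    (T : ℕ → Set (Euc n))
    (hmax : ∀ i, ∀ z ∈ F, ∃ x ∈ T i, dist z x < lam ^ i)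
    (hN : ∀ i : ℕ, ∀ x ∈ T i, ∃ j, i < j ∧
      {y ∈ T j | (ball y (lam ^ j) ∩ ball x (lam ^ i)).Nonempty}.Finite ∧
      ({y ∈ T j | (ball y (lam ^ j) ∩ ball x (lam ^ i)).Nonempty}.ncard : ℝ)
        < lam ^ (-((j : ℝ) - (i : ℝ)) * s)) :
    dimH F ≤ ENNReal.ofReal s := by
  by_contra! hlt
  obtain ⟨z, hzF, hz⟩ := exists_mem_nhdsWithin_lt_dimH_of_lt_dimH hlt
  obtain ⟨x, hx, hzx⟩ := hmax 0 z hzF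
  have hnhds : F ∩ ball x (lam ^ 0) ∈ 𝓝[F] z := inter_mem_nhdsWithin F (isOpen_ball.mem_nhds hzx)
  exact (hz _ hnhds).not_ge (dimH_inter_ball_le_of_netNeighbors hl0 hl1 hmax hN hx)

/-- If `F ⊆ ℝⁿ`, `0 < λ < 1`, `s ≥ 0`, and for every `i` the set `T i` is a maximal
`λ^i`-separated net in `F`, and for each `i` and each net point `x ∈ T i` there is
`j > i` with `N_j < λ^{-(j-i)s}`, then `dim_H F ≤ s`. -/
theorem stmt0 {n : ℕ} (F : Set (Euc n)) (lam s : ℝ) (hl0 : 0 < lam) (hl1 : lam < 1)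
    (hs : 0 ≤ s) (T : ℕ → Set (Euc n))
    (hsub : ∀ i, T i ⊆ F)
    (hsep : ∀ i, ∀ x ∈ T i, ∀ y ∈ T i, x ≠ y → lam ^ i ≤ dist x y)
    (hmax : ∀ i, ∀ z ∈ F, ∃ x ∈ T i, dist z x < lam ^ i)
    (hN : ∀ i : ℕ, ∀ x ∈ T i, ∃ j, i < j ∧
      {y ∈ T j | (ball y (lam ^ j) ∩ ball x (lam ^ i)).Nonempty}.Finite ∧
      ({y ∈ T j | (ball y (lam ^ j) ∩ ball x (lam ^ i)).Nonempty}.ncard : ℝ)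
        < lam ^ (-((j : ℝ) - (i : ℝ)) * s)) :
    dimH F ≤ ENNReal.ofReal s :=
  stmt0_general F lam s hl0 hl1 T hmax hN
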